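/- Let Ω = (0,1)^d ⊂ ℝ^d, let a ∈ ℝ^d be a unit vector, b ∈ ℝ, ε > 0, and let χ be the indicator function of {x ∈ Ω : a·x - b > 0}. Define N(x) = 1 - σ(1 - σ(a·x - b)/ε) with σ the ReLU. Then for any p ∈ [1, ∞), the L^p(Ω) norm of χ - N is at most (volume of {x ∈ Ω : 0 < a·x - b < ε})^{1/p}. -/

import Mathlib

open MeasureTheory RealInnerProductSpace

theorem stmt_2 (d : ℕ) (a : EuclideanSpace ℝ (Fin d)) (ha : ‖a‖ = 1) (b ε : ℝ) (hε : 0 < ε)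
    (σ : ℝ → ℝ) (hσ : ∀ t, σ t = max 0 t)
    (N χ : EuclideanSpace ℝ (Fin d) → ℝ)
    (hN : ∀ x, N x = 1 - σ (1 - σ (⟪a, x⟫ - b) / ε))
    (Ω : Set (EuclideanSpace ℝ (Fin d)))
    (hΩ : Ω = WithLp.ofLp ⁻¹' (Set.univ.pi fun _ : Fin d => Set.Ioo (0 : ℝ) 1))
    (hχ : ∀ x ∈ Ω, χ x = if ⟪a, x⟫ - b > 0 then 1 else 0)
    (p : ℝ) (hp : 1 ≤ p) :
    (∫ x in Ω, |χ x - N x| ^ p) ^ (1 / p) ≤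
      (volume {x ∈ Ω | 0 < ⟪a, x⟫ - b ∧ ⟪a, x⟫ - b < ε}).toReal ^ (1 / p) := by
  have hp0 : (0:ℝ) < p := lt_of_lt_of_le one_pos hp
  have hT : Continuous fun x : EuclideanSpace ℝ (Fin d) => ⟪a, x⟫ - b :=
    (continuous_const.inner continuous_id).sub continuous_const
  have hΩm : MeasurableSet Ω := by
    rw [hΩ]; exact (WithLp.measurable_ofLp _ _) (MeasurableSet.univ_pi fun i => measurableSet_Ioo)
  set S := {x ∈ Ω | 0 < ⟪a, x⟫ - b ∧ ⟪a, x⟫ - b < ε} with hSdef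
  have hSm : MeasurableSet S := by
    apply hΩm.inter
    exact (measurableSet_lt measurable_const hT.measurable).inter
      (measurableSet_lt hT.measurable measurable_const)
  -- Ω is bounded, hence has finite volume
  have hΩbd : Bornology.IsBounded Ω := by
    rw [Metric.isBounded_iff_subset_closedBall 0]
    refine ⟨Real.sqrt d, fun x hx => ?_⟩
    rw [hΩ, Set.mem_preimage, Set.mem_pi] at hx
    simp only [Metric.mem_closedBall, dist_zero_right]
    rw [EuclideanSpace.norm_eq]
    apply Real.sqrt_le_sqrt
    have hle : ∀ i ∈ Finset.univ, ‖x i‖ ^ 2 ≤ (1:ℝ) := fun i _ => by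
      have := hx i (Set.mem_univ i)
      have h1 : |x i| ≤ 1 := by
        rw [abs_le]; constructor <;> [linarith [this.1]; linarith [this.2]]
      calc ‖x i‖ ^ 2 = |x i| ^ 2 := by rw [Real.norm_eq_abs]
        _ ≤ 1 ^ 2 := by nlinarith [abs_nonneg (x i)]
        _ = 1 := one_pow 2
    calc ∑ i, ‖x i‖ ^ 2 ≤ ∑ _i : Fin d, (1:ℝ) := Finset.sum_le_sum hle
      _ = d := by simp
  have hSvol : volume S < ⊤ :=
    lt_of_le_of_lt (measure_mono (Set.sep_subset _ _)) hΩbd.measure_lt_top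
  -- pointwise facts
  have hdiff : ∀ x ∈ Ω, x ∉ S → χ x - N x = 0 := by
    intro x hx hxS
    have hns : ¬ (0 < ⟪a, x⟫ - b ∧ ⟪a, x⟫ - b < ε) := fun h => hxS ⟨hx, h⟩
    rw [hχ x hx, hN x, hσ, hσ]
    set t := ⟪a, x⟫ - b with ht
    rcases le_or_gt t 0 with h0 | h0
    · rw [if_neg (by simpa using not_lt.mpr h0)]
      rw [max_eq_left h0]
      norm_num
    · have hge : ε ≤ t := by
        by_contra hc
        exact hns ⟨h0, not_le.mp hc⟩
      rw [if_pos (by simpa using h0), max_eq_right h0.le,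
        max_eq_left (by rw [sub_nonpos]; exact (one_le_div hε).mpr hge)]
      ring
  have hbd : ∀ x ∈ Ω, |χ x - N x| ≤ 1 := by
    intro x hx
    rw [hχ x hx, hN x, hσ, hσ]
    set t := ⟪a, x⟫ - b with ht
    have h1 : (0:ℝ) ≤ max 0 t / ε := div_nonneg (le_max_left _ _) hε.le
    have h2 : max 0 (1 - max 0 t / ε) ≤ 1 := max_le (by norm_num) (by linarith)
    have h3 : (0:ℝ) ≤ max 0 (1 - max 0 t / ε) := le_max_left _ _
    rw [abs_le]
    split <;> constructor <;> linarith
  have key : ∫ x in Ω, |χ x - N x| ^ p ≤ (volume S).toReal := by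
    have hg : Integrable (S.indicator fun _ => (1:ℝ)) (volume.restrict Ω) := by
      rw [integrable_indicator_iff hSm]
      apply (integrableOn_const_iff (by simp)).mpr
      right
      exact lt_of_le_of_lt (Measure.restrict_apply_le _ _) hSvol
    refine le_trans (integral_mono_of_nonneg ?_ hg ?_) ?_
    · filter_upwards with x
      positivity
    · rw [Filter.EventuallyLE, ae_restrict_iff' hΩm]
      filter_upwards with x hx
      by_cases hxS : x ∈ S
      · rw [Set.indicator_of_mem hxS]
        exact Real.rpow_le_one (abs_nonneg _) (hbd x hx) hp0.le
      · rw [Set.indicator_of_notMem hxS, hdiff x hx hxS, abs_zero,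
          Real.zero_rpow hp0.ne']
    · rw [integral_indicator hSm, Measure.restrict_restrict hSm,
        Set.inter_eq_left.mpr (Set.sep_subset _ _), setIntegral_const, smul_eq_mul, mul_one]
      exact le_rfl
  have h0 : 0 ≤ ∫ x in Ω, |χ x - N x| ^ p :=
    integral_nonneg fun x => Real.rpow_nonneg (abs_nonneg _) _
  exact Real.rpow_le_rpow h0 key (by positivity)
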